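/- arXiv:2211.01995 — 4 statements merged into one kernel-verified Lean document; each statement's English description precedes it below -/
import Mathlib

section
/- Assume M is invertible. Then for every λ ∈ ℂ, rank(Δ₁ − λΔ₀) = rank(A(λ)) + rank(B), where A(λ) is the 2n²×2n² block matrix [[I⊗Q(λ) − Q(λ)⊗I, 0],[I⊗Q'(λ), I⊗Q(λ) − Q(λ)⊗I]] and B = I₂ ⊗ (M⁻¹L₂⊗I − I⊗M⁻¹L₂). -/
open Matrix
open scoped Kronecker
set_option maxHeartbeats 1600000

private def prodEquivSub {R M N : Type*} [Ring R] [AddCommGroup M] [AddCommGroup N]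
    [Module R M] [Module R N] (p : Submodule R M) (q : Submodule R N) :
    (p.prod q) ≃ₗ[R] p × q where
  toFun x := (⟨x.1.1, x.2.1⟩, ⟨x.1.2, x.2.2⟩)
  invFun x := ⟨(x.1.1, x.2.1), ⟨x.1.2, x.2.2⟩⟩
  map_add' _ _ := rfl
  map_smul' _ _ := rfl
  left_inv _ := rfl
  right_inv _ := rfl

private lemma range_prodMap' {R M N M' N' : Type*} [CommRing R] [AddCommGroup M]
    [AddCommGroup N] [AddCommGroup M'] [AddCommGroup N'] [Module R M] [Module R N]
    [Module R M'] [Module R N'] (f : M →ₗ[R] M') (g : N →ₗ[R] N') :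
    LinearMap.range (f.prodMap g) = (LinearMap.range f).prod (LinearMap.range g) := by
  ext ⟨a, b⟩
  simp only [LinearMap.mem_range, Submodule.mem_prod, LinearMap.prodMap_apply,
    Prod.mk.injEq, Prod.exists]
  constructor
  · rintro ⟨x, y, hx, hy⟩; exact ⟨⟨x, hx⟩, ⟨y, hy⟩⟩
  · rintro ⟨⟨x, hx⟩, ⟨y, hy⟩⟩; exact ⟨x, y, hx, hy⟩

private lemma rank_fromBlocks_diag {m n p q : Type*} [Fintype m] [Fintype n] [Fintype p]
    [Fintype q] [DecidableEq n] [DecidableEq q]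
    (A : Matrix m n ℂ) (D : Matrix p q ℂ) :
    (Matrix.fromBlocks A 0 0 D).rank = A.rank + D.rank := by
  have h : (Matrix.fromBlocks A 0 0 D).mulVecLin
      = ((LinearEquiv.sumArrowLequivProdArrow m p ℂ ℂ).symm.toLinearMap.comp
          ((A.mulVecLin.prodMap D.mulVecLin).comp
            (LinearEquiv.sumArrowLequivProdArrow n q ℂ ℂ).toLinearMap)) := by
    apply LinearMap.ext; intro x
    funext i
    cases i <;>
      simp [Matrix.mulVec, Matrix.fromBlocks, Fintype.sum_sum_type,
        dotProduct, LinearEquiv.sumArrowLequivProdArrow]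
  rw [Matrix.rank, h, LinearMap.range_comp, LinearMap.range_comp_of_range_eq_top _
    (LinearEquiv.range _), range_prodMap', LinearEquiv.finrank_map_eq,
    (prodEquivSub _ _).finrank_eq, Module.finrank_prod, Matrix.rank, Matrix.rank]

private def finTwoProdEquiv (ι : Type*) : ι × Fin 2 ≃ ι ⊕ ι where
  toFun x := if x.2 = 0 then Sum.inl x.1 else Sum.inr x.1
  invFun y := Sum.elim (fun p => (p, 0)) (fun p => (p, 1)) y
  left_inv := by rintro ⟨p, i⟩; fin_cases i <;> simp
  right_inv := by rintro (p | p) <;> simp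

private def eXEquiv (n : ℕ) : Fin n × (Fin n ⊕ Fin n) ≃ Fin 2 × (Fin n × Fin n) where
  toFun x := match x.2 with
    | .inl b => ((0 : Fin 2), (x.1, b))
    | .inr b => ((1 : Fin 2), (x.1, b))
  invFun y := (y.2.1, if y.1 = 0 then .inl y.2.2 else .inr y.2.2)
  left_inv := by rintro ⟨a, b | b⟩ <;> simp
  right_inv := by rintro ⟨i, a, b⟩; fin_cases i <;> simp

namespace ZGV1

variable {n : ℕ}

def Lt2 (L2 : Matrix (Fin n) (Fin n) ℂ) : Matrix (Fin n ⊕ Fin n) (Fin n ⊕ Fin n) ℂ :=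
  Matrix.fromBlocks L2 0 0 L2

def Lt1 (L2 L1 : Matrix (Fin n) (Fin n) ℂ) : Matrix (Fin n ⊕ Fin n) (Fin n ⊕ Fin n) ℂ :=
  Matrix.fromBlocks L1 0 ((2 : ℂ) • L2) L1

def Lt0 (L1 L0 : Matrix (Fin n) (Fin n) ℂ) : Matrix (Fin n ⊕ Fin n) (Fin n ⊕ Fin n) ℂ :=
  Matrix.fromBlocks L0 0 L1 L0

def Mt (M : Matrix (Fin n) (Fin n) ℂ) : Matrix (Fin n ⊕ Fin n) (Fin n ⊕ Fin n) ℂ :=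
  Matrix.fromBlocks M 0 0 M

def C2 : Matrix (Fin 2) (Fin 2) ℂ := !![1, 0; 0, 0]
def C1 : Matrix (Fin 2) (Fin 2) ℂ := !![0, -1; -1, 0]
def C0 : Matrix (Fin 2) (Fin 2) ℂ := !![0, 0; 0, 1]

def Δ0 (L2 L1 L0 M : Matrix (Fin n) (Fin n) ℂ) :
    Matrix ((Fin n × (Fin n ⊕ Fin n)) × Fin 2) ((Fin n × (Fin n ⊕ Fin n)) × Fin 2) ℂ :=
  L1 ⊗ₖ Mt M ⊗ₖ C2 + M ⊗ₖ Lt2 L2 ⊗ₖ C1 - M ⊗ₖ Lt1 L2 L1 ⊗ₖ C2 - L2 ⊗ₖ Mt M ⊗ₖ C1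

def Δ1 (L2 L1 L0 M : Matrix (Fin n) (Fin n) ℂ) :
    Matrix ((Fin n × (Fin n ⊕ Fin n)) × Fin 2) ((Fin n × (Fin n ⊕ Fin n)) × Fin 2) ℂ :=
  L2 ⊗ₖ Mt M ⊗ₖ C0 - L0 ⊗ₖ Mt M ⊗ₖ C2 - M ⊗ₖ Lt2 L2 ⊗ₖ C0 + M ⊗ₖ Lt0 L1 L0 ⊗ₖ C2

/-- `Q(λ) = M⁻¹(L₀ + λL₁ + λ²L₂)`. -/
noncomputable def Q (L2 L1 L0 M : Matrix (Fin n) (Fin n) ℂ) (lam : ℂ) :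
    Matrix (Fin n) (Fin n) ℂ :=
  M⁻¹ * (L0 + lam • L1 + lam ^ 2 • L2)

/-- `Q'(λ) = M⁻¹(L₁ + 2λL₂)`. -/
noncomputable def Q' (L2 L1 M : Matrix (Fin n) (Fin n) ℂ) (lam : ℂ) :
    Matrix (Fin n) (Fin n) ℂ :=
  M⁻¹ * (L1 + (2 * lam) • L2)

/-- `A(λ) = [[I⊗Q(λ) − Q(λ)⊗I, 0],[I⊗Q'(λ), I⊗Q(λ) − Q(λ)⊗I]]`. -/
noncomputable def A (L2 L1 L0 M : Matrix (Fin n) (Fin n) ℂ) (lam : ℂ) :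
    Matrix ((Fin n × Fin n) ⊕ (Fin n × Fin n)) ((Fin n × Fin n) ⊕ (Fin n × Fin n)) ℂ :=
  Matrix.fromBlocks
    ((1 : Matrix (Fin n) (Fin n) ℂ) ⊗ₖ Q L2 L1 L0 M lam - Q L2 L1 L0 M lam ⊗ₖ (1 : Matrix (Fin n) (Fin n) ℂ))
    0
    ((1 : Matrix (Fin n) (Fin n) ℂ) ⊗ₖ Q' L2 L1 M lam)
    ((1 : Matrix (Fin n) (Fin n) ℂ) ⊗ₖ Q L2 L1 L0 M lam - Q L2 L1 L0 M lam ⊗ₖ (1 : Matrix (Fin n) (Fin n) ℂ))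

/-- `B = I₂ ⊗ (M⁻¹L₂⊗I − I⊗M⁻¹L₂)`. -/
noncomputable def B (L2 M : Matrix (Fin n) (Fin n) ℂ) :
    Matrix (Fin 2 × (Fin n × Fin n)) (Fin 2 × (Fin n × Fin n)) ℂ :=
  (1 : Matrix (Fin 2) (Fin 2) ℂ) ⊗ₖ
    ((M⁻¹ * L2) ⊗ₖ (1 : Matrix (Fin n) (Fin n) ℂ)
      - (1 : Matrix (Fin n) (Fin n) ℂ) ⊗ₖ (M⁻¹ * L2))

/-- If `M` is invertible then for every `λ ∈ ℂ`,
`rank(Δ₁ − λΔ₀) = rank(A(λ)) + rank(B)`. -/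
theorem rank_pencil_eq_rank_A_add_rank_B
    (n : ℕ) (hn : 1 ≤ n) (L2 L1 L0 M : Matrix (Fin n) (Fin n) ℂ)
    (hM : IsUnit M) (lam : ℂ) :
    (Δ1 L2 L1 L0 M - lam • Δ0 L2 L1 L0 M).rank
      = (A L2 L1 L0 M lam).rank + (B L2 M).rank := by
  have hdM : IsUnit M.det := (Matrix.isUnit_iff_isUnit_det M).mp hM
  have hdMi : IsUnit M⁻¹.det := Matrix.isUnit_nonsing_inv_det M hdM
  set N2 := M⁻¹ * L2 with hN2
  set N1 := M⁻¹ * L1 with hN1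
  set N0 := M⁻¹ * L0 with hN0
  -- the invertible left factor
  set Finv : Matrix ((Fin n × (Fin n ⊕ Fin n)) × Fin 2) ((Fin n × (Fin n ⊕ Fin n)) × Fin 2) ℂ
    := M⁻¹ ⊗ₖ Mt M⁻¹ ⊗ₖ (1 : Matrix (Fin 2) (Fin 2) ℂ) with hFinv
  have hdFinv : IsUnit Finv.det := by
    rw [hFinv, Matrix.det_kronecker, Matrix.det_kronecker, Mt,
      Matrix.det_fromBlocks_zero₂₁, Matrix.det_one]
    exact (((hdMi.pow _).mul ((hdMi.mul hdMi).pow _)).pow _).mul (isUnit_one.pow _)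
  -- key multiplication lemma
  have key : ∀ (P : Matrix (Fin n) (Fin n) ℂ) (Ql : Matrix (Fin n ⊕ Fin n) (Fin n ⊕ Fin n) ℂ)
      (C : Matrix (Fin 2) (Fin 2) ℂ),
      Finv * (P ⊗ₖ Ql ⊗ₖ C) = (M⁻¹ * P) ⊗ₖ (Mt M⁻¹ * Ql) ⊗ₖ C := by
    intro P Ql C
    rw [hFinv, ← Matrix.mul_kronecker_mul, ← Matrix.mul_kronecker_mul, Matrix.one_mul]
  have hMt : Mt M⁻¹ * Mt M = (1 : Matrix (Fin n ⊕ Fin n) (Fin n ⊕ Fin n) ℂ) := by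
    rw [Mt, Mt, Matrix.fromBlocks_multiply]
    simp [Matrix.nonsing_inv_mul M hdM, ← Matrix.fromBlocks_one]
  have hL2' : Mt M⁻¹ * Lt2 L2 = Lt2 N2 := by
    rw [Mt, Lt2, Matrix.fromBlocks_multiply, Lt2]
    simp [← hN2]
  have hL1' : Mt M⁻¹ * Lt1 L2 L1 = Lt1 N2 N1 := by
    rw [Mt, Lt1, Matrix.fromBlocks_multiply, Lt1]
    simp [Matrix.mul_smul, ← hN1, ← hN2]
  have hL0' : Mt M⁻¹ * Lt0 L1 L0 = Lt0 N1 N0 := by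
    rw [Mt, Lt0, Matrix.fromBlocks_multiply, Lt0]
    simp [← hN1, ← hN0]
  set E : Matrix ((Fin n × (Fin n ⊕ Fin n)) × Fin 2) ((Fin n × (Fin n ⊕ Fin n)) × Fin 2) ℂ :=
      (N2 ⊗ₖ (1 : Matrix (Fin n ⊕ Fin n) (Fin n ⊕ Fin n) ℂ) ⊗ₖ C0
        - N0 ⊗ₖ (1 : Matrix (Fin n ⊕ Fin n) (Fin n ⊕ Fin n) ℂ) ⊗ₖ C2
        - (1 : Matrix (Fin n) (Fin n) ℂ) ⊗ₖ Lt2 N2 ⊗ₖ C0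
        + (1 : Matrix (Fin n) (Fin n) ℂ) ⊗ₖ Lt0 N1 N0 ⊗ₖ C2)
      - lam • (N1 ⊗ₖ (1 : Matrix (Fin n ⊕ Fin n) (Fin n ⊕ Fin n) ℂ) ⊗ₖ C2
        + (1 : Matrix (Fin n) (Fin n) ℂ) ⊗ₖ Lt2 N2 ⊗ₖ C1
        - (1 : Matrix (Fin n) (Fin n) ℂ) ⊗ₖ Lt1 N2 N1 ⊗ₖ C2
        - N2 ⊗ₖ (1 : Matrix (Fin n ⊕ Fin n) (Fin n ⊕ Fin n) ℂ) ⊗ₖ C1) with hEdef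
  have hE : Finv * (Δ1 L2 L1 L0 M - lam • Δ0 L2 L1 L0 M) = E := by
    rw [hEdef, Δ1, Δ0]
    simp only [Matrix.mul_sub, Matrix.mul_add, Matrix.mul_smul, key, hMt, hL2', hL1', hL0',
      Matrix.nonsing_inv_mul M hdM, ← hN0, ← hN1, ← hN2]
  -- row/column operations
  set T : Matrix ((Fin n × (Fin n ⊕ Fin n)) × Fin 2) ((Fin n × (Fin n ⊕ Fin n)) × Fin 2) ℂ :=
    (1 : Matrix (Fin n × (Fin n ⊕ Fin n)) (Fin n × (Fin n ⊕ Fin n)) ℂ) ⊗ₖ !![1, lam; 0, 1]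
    with hTdef
  set S : Matrix ((Fin n × (Fin n ⊕ Fin n)) × Fin 2) ((Fin n × (Fin n ⊕ Fin n)) × Fin 2) ℂ :=
    (1 : Matrix (Fin n × (Fin n ⊕ Fin n)) (Fin n × (Fin n ⊕ Fin n)) ℂ) ⊗ₖ !![1, 0; lam, 1]
    with hSdef
  have hdT : IsUnit T.det := by
    rw [hTdef, Matrix.det_kronecker, Matrix.det_one, Matrix.det_fin_two_of]
    simp
  have hdS : IsUnit S.det := by
    rw [hSdef, Matrix.det_kronecker, Matrix.det_one, Matrix.det_fin_two_of]
    simp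
  have key2 : ∀ (P : Matrix (Fin n × (Fin n ⊕ Fin n)) (Fin n × (Fin n ⊕ Fin n)) ℂ)
      (C : Matrix (Fin 2) (Fin 2) ℂ),
      T * (P ⊗ₖ C) * S = P ⊗ₖ (!![1, lam; 0, 1] * C * !![1, 0; lam, 1]) := by
    intro P C
    rw [hTdef, hSdef, ← Matrix.mul_kronecker_mul, ← Matrix.mul_kronecker_mul,
      Matrix.one_mul, Matrix.mul_one]
  have hC2' : !![(1:ℂ), lam; 0, 1] * C2 * !![1, 0; lam, 1] = C2 := by
    ext i j
    fin_cases i <;> fin_cases j <;>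
      simp [C2, Matrix.mul_apply, Fin.sum_univ_two]
  have hC1' : !![(1:ℂ), lam; 0, 1] * C1 * !![1, 0; lam, 1] = !![-2*lam, -1; -1, 0] := by
    ext i j
    fin_cases i <;> fin_cases j <;>
      simp [C1, Matrix.mul_apply, Fin.sum_univ_two] <;> ring
  have hC0' : !![(1:ℂ), lam; 0, 1] * C0 * !![1, 0; lam, 1] = !![lam^2, lam; lam, 1] := by
    ext i j
    fin_cases i <;> fin_cases j <;>
      simp [C0, Matrix.mul_apply, Fin.sum_univ_two] <;> ring
  set G : Matrix (Fin n × (Fin n ⊕ Fin n)) (Fin n × (Fin n ⊕ Fin n)) ℂ :=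
    (1 : Matrix (Fin n) (Fin n) ℂ) ⊗ₖ (Lt0 N1 N0 + lam • Lt1 N2 N1 + lam ^ 2 • Lt2 N2)
      - (N0 + lam • N1 + lam ^ 2 • N2) ⊗ₖ (1 : Matrix (Fin n ⊕ Fin n) (Fin n ⊕ Fin n) ℂ)
    with hGdef
  set X : Matrix (Fin n × (Fin n ⊕ Fin n)) (Fin n × (Fin n ⊕ Fin n)) ℂ :=
    N2 ⊗ₖ (1 : Matrix (Fin n ⊕ Fin n) (Fin n ⊕ Fin n) ℂ)
      - (1 : Matrix (Fin n) (Fin n) ℂ) ⊗ₖ Lt2 N2 with hXdef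
  have hTES : T * E * S = G ⊗ₖ C2 + X ⊗ₖ C0 := by
    rw [hEdef]
    simp only [Matrix.mul_sub, Matrix.mul_add, Matrix.mul_smul, Matrix.sub_mul, Matrix.add_mul,
      Matrix.smul_mul, key2, hC2', hC1', hC0', hGdef, hXdef]
    ext x y
    obtain ⟨⟨a, b⟩, i⟩ := x
    obtain ⟨⟨c, d⟩, j⟩ := y
    fin_cases i <;> fin_cases j <;>
      simp [Matrix.kroneckerMap_apply, C2, C0, Matrix.add_apply, Matrix.sub_apply,
        Matrix.smul_apply, smul_eq_mul] <;> ring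
  -- block diagonal structure
  have h5 : G ⊗ₖ C2 + X ⊗ₖ C0
      = (Matrix.fromBlocks G 0 0 X).submatrix
          (finTwoProdEquiv (Fin n × (Fin n ⊕ Fin n))) (finTwoProdEquiv (Fin n × (Fin n ⊕ Fin n))) := by
    ext ⟨p, i⟩ ⟨q, j⟩
    fin_cases i <;> fin_cases j <;>
      simp [finTwoProdEquiv, C2, C0, Matrix.fromBlocks, Matrix.submatrix_apply,
        Matrix.kroneckerMap_apply]
  -- identification of G with A
  have hQ : Q L2 L1 L0 M lam = N0 + lam • N1 + lam ^ 2 • N2 := by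
    rw [Q, Matrix.mul_add, Matrix.mul_add, Matrix.mul_smul, Matrix.mul_smul, hN0, hN1, hN2]
  have hQ' : Q' L2 L1 M lam = N1 + (2 * lam) • N2 := by
    rw [Q', Matrix.mul_add, Matrix.mul_smul, hN1, hN2]
  have hGA : G = (A L2 L1 L0 M lam).submatrix
      (Equiv.prodSumDistrib (Fin n) (Fin n) (Fin n)) (Equiv.prodSumDistrib (Fin n) (Fin n) (Fin n)) := by
    rw [hGdef, A, hQ, hQ']
    ext ⟨a, b⟩ ⟨c, d⟩
    rcases b with b | b <;> rcases d with d | d <;>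
      simp [Lt0, Lt1, Lt2, Matrix.fromBlocks, Matrix.submatrix_apply, Equiv.prodSumDistrib,
        Matrix.kroneckerMap_apply, Matrix.one_apply, Matrix.add_apply, Matrix.sub_apply,
        Matrix.smul_apply, smul_eq_mul] <;> split_ifs <;> ring
  -- identification of X with B
  have hXB : X = (B L2 M).submatrix (eXEquiv n) (eXEquiv n) := by
    rw [hXdef, B]
    ext ⟨a, b⟩ ⟨c, d⟩
    rcases b with b | b <;> rcases d with d | d <;>
      simp [Lt2, Matrix.fromBlocks, Matrix.submatrix_apply, eXEquiv, ← hN2,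
        Matrix.kroneckerMap_apply, Matrix.one_apply, Matrix.sub_apply] <;>
      split_ifs <;> ring
  -- assemble
  calc (Δ1 L2 L1 L0 M - lam • Δ0 L2 L1 L0 M).rank
      = (Finv * (Δ1 L2 L1 L0 M - lam • Δ0 L2 L1 L0 M)).rank :=
        (Matrix.rank_mul_eq_right_of_isUnit_det Finv _ hdFinv).symm
    _ = E.rank := by rw [hE]
    _ = (T * E * S).rank := by
        rw [Matrix.rank_mul_eq_left_of_isUnit_det S (T * E) hdS,
          Matrix.rank_mul_eq_right_of_isUnit_det T E hdT]
    _ = (G ⊗ₖ C2 + X ⊗ₖ C0).rank := by rw [hTES]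
    _ = G.rank + X.rank := by rw [h5, Matrix.rank_submatrix, rank_fromBlocks_diag]
    _ = (A L2 L1 L0 M lam).rank + (B L2 M).rank := by
        rw [hGA, hXB, Matrix.rank_submatrix, Matrix.rank_submatrix]

end ZGV1
end

section
/- Let δ ∈ ℂ, let λ, μ, η ∈ ℂ, and let u, v ∈ ℂⁿ be nonzero vectors. Then there exists a nonzero w ∈ ℂ² such that (ηL₂ + λL₁ + L₀ + μM)u = 0, (η(1+δ)²L₂ + λ(1+δ)L₁ + L₀ + μM)v = 0 and (ηC₂ + λC₁ + C₀)w = 0 all hold if and only if η = λ², λ is an eigenvalue of the quadratic eigenvalue problem (λ²L₂ + λL₁ + L₀ + μM)x = 0 with eigenvector u, and λ(1+δ) is an eigenvalue of the same quadratic eigenvalue problem with eigenvector v. -/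
open Matrix

namespace ZGV10

def C2 : Matrix (Fin 2) (Fin 2) ℂ := !![1, 0; 0, 0]
def C1 : Matrix (Fin 2) (Fin 2) ℂ := !![0, -1; -1, 0]
def C0 : Matrix (Fin 2) (Fin 2) ℂ := !![0, 0; 0, 1]

/-- There exists a nonzero `w ∈ ℂ²` such that `(ηL₂ + λL₁ + L₀ + μM)u = 0`,
`(η(1+δ)²L₂ + λ(1+δ)L₁ + L₀ + μM)v = 0` and `(ηC₂ + λC₁ + C₀)w = 0` hold iff
`η = λ²`, `λ` is an eigenvalue of the quadratic eigenvalue problem at `μ` with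
eigenvector `u`, and `λ(1+δ)` is an eigenvalue of the same problem with
eigenvector `v`. -/
theorem MFRD_three_parameter_characterization
    (n : ℕ) (hn : 1 ≤ n) (L2 L1 L0 M : Matrix (Fin n) (Fin n) ℂ)
    (δ lam mu eta : ℂ) (u v : Fin n → ℂ) (hu : u ≠ 0) (hv : v ≠ 0) :
    (∃ w : Fin 2 → ℂ, w ≠ 0 ∧
        (eta • L2 + lam • L1 + L0 + mu • M) *ᵥ u = 0 ∧
        ((eta * (1 + δ) ^ 2) • L2 + (lam * (1 + δ)) • L1 + L0 + mu • M) *ᵥ v = 0 ∧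
        (eta • C2 + lam • C1 + C0) *ᵥ w = 0)
      ↔ (eta = lam ^ 2 ∧
          (lam ^ 2 • L2 + lam • L1 + L0 + mu • M) *ᵥ u = 0 ∧
          ((lam * (1 + δ)) ^ 2 • L2 + (lam * (1 + δ)) • L1 + L0 + mu • M) *ᵥ v = 0) := by
  constructor
  · rintro ⟨w, hw, h1, h2, h3⟩
    have e0 := congrFun h3 0
    have e1 := congrFun h3 1
    simp [C2, C1, C0, mulVec, dotProduct, Fin.sum_univ_two] at e0 e1
    -- e0 : eta * w 0 - lam * w 1 = 0 (in some form), e1 : -lam * w 0 + w 1 = 0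
    have hw1 : w 1 = lam * w 0 := by linear_combination e1
    have hw0 : w 0 ≠ 0 := by
      intro h0
      apply hw
      funext i
      fin_cases i
      · exact h0
      · simp [hw1, h0]
    have heta : eta = lam ^ 2 := by
      have : eta * w 0 = lam ^ 2 * w 0 := by
        rw [hw1] at e0; linear_combination e0
      exact mul_right_cancel₀ hw0 this
    refine ⟨heta, ?_, ?_⟩
    · rw [← heta]; exact h1
    · have : (lam * (1 + δ)) ^ 2 = eta * (1 + δ) ^ 2 := by rw [heta]; ring
      rw [this]; exact h2
  · rintro ⟨heta, h1, h2⟩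
    refine ⟨![1, lam], ?_, ?_, ?_, ?_⟩
    · intro h
      have := congrFun h 0
      simp at this
    · rw [heta]; exact h1
    · have : eta * (1 + δ) ^ 2 = (lam * (1 + δ)) ^ 2 := by rw [heta]; ring
      rw [this]; exact h2
    · funext i
      fin_cases i <;>
        simp [C2, C1, C0, mulVec, dotProduct, Fin.sum_univ_two, heta] <;> ring

end ZGV10
end

section
/- Let δ ∈ ℂ and let λ, μ, η ∈ ℂ and u, v ∈ ℂⁿ, w ∈ ℂ² satisfy the three-parameter eigenvalue problem (ηL₂ + λL₁ + L₀ + μM)u = 0, (η(1+δ)²L₂ + λ(1+δ)L₁ + L₀ + μM)v = 0, (ηC₂ + λC₁ + C₀)w = 0. Then the vector z = u⊗v⊗w ∈ ℂ^{2n²} satisfies Δ̃₁ z = λ Δ̃₀ z and Δ̃_M z = μ Δ̃₀ z. -/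
open Matrix
open scoped Kronecker

namespace ZGV11

variable {n : ℕ}

/-- Kronecker product of two vectors: `(u ⊗ v)_{(i,j)} = u_i v_j`. -/
def vecKron {m p : Type*} (u : m → ℂ) (v : p → ℂ) : m × p → ℂ :=
  fun x => u x.1 * v x.2

def C2 : Matrix (Fin 2) (Fin 2) ℂ := !![1, 0; 0, 0]
def C1 : Matrix (Fin 2) (Fin 2) ℂ := !![0, -1; -1, 0]
def C0 : Matrix (Fin 2) (Fin 2) ℂ := !![0, 0; 0, 1]

/-- `Δ̃₀ = −L₂⊗M⊗C₁ + L₁⊗M⊗C₂ + (1+δ)²·M⊗L₂⊗C₁ − (1+δ)·M⊗L₁⊗C₂`. -/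
def Δt0 (L2 L1 M : Matrix (Fin n) (Fin n) ℂ) (δ : ℂ) :
    Matrix ((Fin n × Fin n) × Fin 2) ((Fin n × Fin n) × Fin 2) ℂ :=
  -(L2 ⊗ₖ M ⊗ₖ C1) + L1 ⊗ₖ M ⊗ₖ C2 + (1 + δ) ^ 2 • (M ⊗ₖ L2 ⊗ₖ C1)
    - (1 + δ) • (M ⊗ₖ L1 ⊗ₖ C2)

/-- `Δ̃₁ = L₂⊗M⊗C₀ − L₀⊗M⊗C₂ − (1+δ)²·M⊗L₂⊗C₀ + M⊗L₀⊗C₂`. -/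
def Δt1 (L2 L0 M : Matrix (Fin n) (Fin n) ℂ) (δ : ℂ) :
    Matrix ((Fin n × Fin n) × Fin 2) ((Fin n × Fin n) × Fin 2) ℂ :=
  L2 ⊗ₖ M ⊗ₖ C0 - L0 ⊗ₖ M ⊗ₖ C2 - (1 + δ) ^ 2 • (M ⊗ₖ L2 ⊗ₖ C0) + M ⊗ₖ L0 ⊗ₖ C2

/-- `Δ̃_M = −(1+δ)·L₂⊗L₁⊗C₀ + L₂⊗L₀⊗C₁ + (1+δ)²·L₁⊗L₂⊗C₀ − L₁⊗L₀⊗C₂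
          − (1+δ)²·L₀⊗L₂⊗C₁ + (1+δ)·L₀⊗L₁⊗C₂`. -/
def ΔtM (L2 L1 L0 : Matrix (Fin n) (Fin n) ℂ) (δ : ℂ) :
    Matrix ((Fin n × Fin n) × Fin 2) ((Fin n × Fin n) × Fin 2) ℂ :=
  -((1 + δ) • (L2 ⊗ₖ L1 ⊗ₖ C0)) + L2 ⊗ₖ L0 ⊗ₖ C1 + (1 + δ) ^ 2 • (L1 ⊗ₖ L2 ⊗ₖ C0)
    - L1 ⊗ₖ L0 ⊗ₖ C2 - (1 + δ) ^ 2 • (L0 ⊗ₖ L2 ⊗ₖ C1) + (1 + δ) • (L0 ⊗ₖ L1 ⊗ₖ C2)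


lemma kron3_mulVec {m p q : Type*} [Fintype m] [Fintype p] [Fintype q]
    (A : Matrix m m ℂ) (B : Matrix p p ℂ) (C : Matrix q q ℂ)
    (u : m → ℂ) (v : p → ℂ) (w : q → ℂ) :
    (A ⊗ₖ B ⊗ₖ C) *ᵥ vecKron (vecKron u v) w
      = vecKron (vecKron (A *ᵥ u) (B *ᵥ v)) (C *ᵥ w) := by
  funext x
  obtain ⟨⟨i, j⟩, k⟩ := x
  simp only [mulVec, dotProduct, vecKron, kroneckerMap_apply, Fintype.sum_prod_type,
    Finset.sum_mul, Finset.mul_sum]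
  conv_rhs => rw [Finset.sum_comm]
  conv_rhs => enter [2, y]; rw [Finset.sum_comm]
  conv_rhs => rw [Finset.sum_comm]
  refine Finset.sum_congr rfl fun i' _ => Finset.sum_congr rfl fun j' _ =>
    Finset.sum_congr rfl fun k' _ => by ring

/-- If `(λ, μ, η)` with vectors `u, v, w` solves the MFRD three-parameter
eigenvalue problem, then `z = u⊗v⊗w` satisfies `Δ̃₁ z = λΔ̃₀ z` and
`Δ̃_M z = μΔ̃₀ z`. -/
theorem MFRD_decoupled_GEPs
    (n : ℕ) (hn : 1 ≤ n) (L2 L1 L0 M : Matrix (Fin n) (Fin n) ℂ)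
    (δ lam mu eta : ℂ) (u v : Fin n → ℂ) (w : Fin 2 → ℂ)
    (h1 : (eta • L2 + lam • L1 + L0 + mu • M) *ᵥ u = 0)
    (h2 : ((eta * (1 + δ) ^ 2) • L2 + (lam * (1 + δ)) • L1 + L0 + mu • M) *ᵥ v = 0)
    (h3 : (eta • C2 + lam • C1 + C0) *ᵥ w = 0) :
    Δt1 L2 L0 M δ *ᵥ vecKron (vecKron u v) w
        = lam • (Δt0 L2 L1 M δ *ᵥ vecKron (vecKron u v) w) ∧
      ΔtM L2 L1 L0 δ *ᵥ vecKron (vecKron u v) w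
        = mu • (Δt0 L2 L1 M δ *ᵥ vecKron (vecKron u v) w) := by
  have e1 : ∀ i, eta * (L2 *ᵥ u) i + lam * (L1 *ᵥ u) i + (L0 *ᵥ u) i + mu * (M *ᵥ u) i = 0 := by
    intro i
    have := congrFun h1 i
    simpa [add_mulVec, smul_mulVec] using this
  have e2 : ∀ j, (eta * (1 + δ) ^ 2) * (L2 *ᵥ v) j + (lam * (1 + δ)) * (L1 *ᵥ v) j
      + (L0 *ᵥ v) j + mu * (M *ᵥ v) j = 0 := by
    intro j
    have := congrFun h2 j
    simpa [add_mulVec, smul_mulVec] using this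
  have e30 := congrFun h3 0
  have e31 := congrFun h3 1
  simp only [add_mulVec, smul_mulVec, Pi.add_apply, Pi.smul_apply, smul_eq_mul,
    Pi.zero_apply] at e30 e31
  have c20 : (C2 *ᵥ w) 0 = w 0 := by simp [C2, mulVec, dotProduct, Fin.sum_univ_two]
  have c21 : (C2 *ᵥ w) 1 = 0 := by simp [C2, mulVec, dotProduct, Fin.sum_univ_two]
  have c10 : (C1 *ᵥ w) 0 = -w 1 := by simp [C1, mulVec, dotProduct, Fin.sum_univ_two]
  have c11 : (C1 *ᵥ w) 1 = -w 0 := by simp [C1, mulVec, dotProduct, Fin.sum_univ_two]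
  have c00 : (C0 *ᵥ w) 0 = 0 := by simp [C0, mulVec, dotProduct, Fin.sum_univ_two]
  have c01 : (C0 *ᵥ w) 1 = w 1 := by simp [C0, mulVec, dotProduct, Fin.sum_univ_two]
  rw [c20, c10, c00] at e30
  rw [c21, c11, c01] at e31
  constructor
  · funext x
    obtain ⟨⟨i, j⟩, k⟩ := x
    simp only [Δt1, Δt0, add_mulVec, sub_mulVec, neg_mulVec, smul_mulVec, kron3_mulVec,
      Pi.add_apply, Pi.sub_apply, Pi.neg_apply, Pi.smul_apply, smul_eq_mul, vecKron]
    fin_cases k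
    · simp only [Fin.mk_zero, Fin.mk_one, c20, c10, c00]
      linear_combination (-(M *ᵥ v) j * w 0) * e1 i + ((M *ᵥ u) i * w 0) * e2 j
        + ((L2 *ᵥ u) i * (M *ᵥ v) j - (1 + δ) ^ 2 * (M *ᵥ u) i * (L2 *ᵥ v) j) * e30
    · simp only [Fin.mk_zero, Fin.mk_one, c21, c11, c01]
      linear_combination ((L2 *ᵥ u) i * (M *ᵥ v) j - (1 + δ) ^ 2 * (M *ᵥ u) i * (L2 *ᵥ v) j) * e31
  · funext x
    obtain ⟨⟨i, j⟩, k⟩ := x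
    simp only [ΔtM, Δt0, add_mulVec, sub_mulVec, neg_mulVec, smul_mulVec, kron3_mulVec,
      Pi.add_apply, Pi.sub_apply, Pi.neg_apply, Pi.smul_apply, smul_eq_mul, vecKron]
    fin_cases k
    · simp only [Fin.mk_zero, Fin.mk_one, c20, c10, c00]
      linear_combination ((1 + δ) ^ 2 * (L2 *ᵥ v) j * w 1 + (1 + δ) * (L1 *ᵥ v) j * w 0) * e1 i
        + (-((L2 *ᵥ u) i * w 1 + (L1 *ᵥ u) i * w 0)) * e2 j
        + ((1 + δ) ^ 2 * (L1 *ᵥ u) i * (L2 *ᵥ v) j - (1 + δ) * (L2 *ᵥ u) i * (L1 *ᵥ v) j) * e30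
    · simp only [Fin.mk_zero, Fin.mk_one, c21, c11, c01]
      linear_combination ((1 + δ) ^ 2 * (L2 *ᵥ v) j * w 0) * e1 i
        + (-((L2 *ᵥ u) i * w 0)) * e2 j
        + ((1 + δ) ^ 2 * (L1 *ᵥ u) i * (L2 *ᵥ v) j - (1 + δ) * (L2 *ᵥ u) i * (L1 *ᵥ v) j) * e31

end ZGV11
end

section
/- Let L₂, L₀, M be real symmetric n×n matrices, L₁ a real antisymmetric n×n matrix, k, ω ∈ ℝ with ω ≠ 0, and let u ∈ ℂⁿ satisfy W(k,ω)u = 0 and uᴴMu ≠ 0. Suppose ω' ∈ ℂ and u' ∈ ℂⁿ satisfy (2ikL₂ + L₁ + 2ωω'M)u + W(k,ω)u' = 0. Then iω' = −(uᴴ i(2ikL₂ + L₁) u)/(2ω · uᴴMu). -/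
open Matrix

namespace ZGV13

variable {n : ℕ}

/-- A real matrix regarded as a complex matrix. -/
def toC (A : Matrix (Fin n) (Fin n) ℝ) : Matrix (Fin n) (Fin n) ℂ :=
  A.map Complex.ofReal

/-- `W(k, ω) = (ik)²L₂ + ikL₁ + L₀ + ω²M`. -/
noncomputable def W (L2 L1 L0 M : Matrix (Fin n) (Fin n) ℝ) (k ω : ℝ) :
    Matrix (Fin n) (Fin n) ℂ :=
  (Complex.I * k) ^ 2 • toC L2 + (Complex.I * k) • toC L1 + toC L0
    + ((ω : ℂ) ^ 2) • toC M

/-- The group velocity formula: if `W(k,ω)u = 0`, `uᴴMu ≠ 0`, `ω ≠ 0`, and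
`(2ikL₂ + L₁ + 2ωω'M)u + W(k,ω)u' = 0`, then
`iω' = −(uᴴ i(2ikL₂ + L₁) u)/(2ω uᴴMu)`. -/
theorem group_velocity_formula
    (n : ℕ) (hn : 1 ≤ n) (L2 L1 L0 M : Matrix (Fin n) (Fin n) ℝ)
    (hL2 : L2.IsSymm) (hL0 : L0.IsSymm) (hM : M.IsSymm) (hL1 : L1ᵀ = -L1)
    (k ω : ℝ) (hω : ω ≠ 0) (u u' : Fin n → ℂ) (ω' : ℂ)
    (hWu : W L2 L1 L0 M k ω *ᵥ u = 0)
    (hMu : star u ⬝ᵥ (toC M *ᵥ u) ≠ 0)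
    (h2 : ((2 * (Complex.I * k)) • toC L2 + toC L1
            + (2 * (ω : ℂ) * ω') • toC M) *ᵥ u
          + W L2 L1 L0 M k ω *ᵥ u' = 0) :
    Complex.I * ω'
      = -(star u ⬝ᵥ ((Complex.I • ((2 * (Complex.I * k)) • toC L2 + toC L1)) *ᵥ u))
          / (2 * (ω : ℂ) * (star u ⬝ᵥ (toC M *ᵥ u))) := by

  have hW : (W L2 L1 L0 M k ω)ᴴ = W L2 L1 L0 M k ω := by
    ext i j
    have h2s : L2 j i = L2 i j := hL2.apply i j
    have h0s : L0 j i = L0 i j := hL0.apply i j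
    have hMs : M j i = M i j := hM.apply i j
    have h1s : L1 j i = -L1 i j := by
      have := congrFun (congrFun hL1 i) j
      simpa [Matrix.transpose_apply] using this
    simp only [W, toC, Matrix.conjTranspose_apply, Matrix.add_apply,
      Matrix.smul_apply, Matrix.map_apply, smul_eq_mul, map_add, _root_.map_mul,
      map_pow, map_neg, Complex.star_def, Complex.conj_ofReal, Complex.conj_I,
      h2s, hMs, h1s, h0s, Complex.ofReal_neg]
    ring
  have hW0 : star u ⬝ᵥ (W L2 L1 L0 M k ω *ᵥ u') = 0 := by
    rw [Matrix.dotProduct_mulVec]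
    have hz : star u ᵥ* W L2 L1 L0 M k ω = 0 := by
      have hs := congrArg star hWu
      rw [Matrix.star_mulVec, hW] at hs
      simpa using hs
    rw [hz]
    simp
  have h3 : star u ⬝ᵥ (((2 * (Complex.I * k)) • toC L2 + toC L1
      + (2 * (ω : ℂ) * ω') • toC M) *ᵥ u) = 0 := by
    have := congrArg (fun v => star u ⬝ᵥ v) h2
    simpa [dotProduct_add, hW0] using this
  set a2 := star u ⬝ᵥ (toC L2 *ᵥ u) with ha2
  set a1 := star u ⬝ᵥ (toC L1 *ᵥ u) with ha1
  set m := star u ⬝ᵥ (toC M *ᵥ u) with hm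
  have h4 : (2 * (Complex.I * k)) * a2 + a1 + (2 * (ω : ℂ) * ω') * m = 0 := by
    simpa [Matrix.add_mulVec, Matrix.smul_mulVec, dotProduct_add,
      dotProduct_smul, smul_eq_mul, ha2, ha1, hm] using h3
  have hnum : star u ⬝ᵥ ((Complex.I • ((2 * (Complex.I * k)) • toC L2 + toC L1)) *ᵥ u)
      = Complex.I * ((2 * (Complex.I * k)) * a2 + a1) := by
    simp [Matrix.add_mulVec, Matrix.smul_mulVec, dotProduct_add,
      dotProduct_smul, smul_eq_mul, ha2, ha1]
    ring
  rw [hnum]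
  have hωc : (ω : ℂ) ≠ 0 := Complex.ofReal_ne_zero.mpr hω
  have heq : (2 * (Complex.I * k)) * a2 + a1 = -(2 * (ω : ℂ) * ω') * m := by
    linear_combination h4
  rw [heq]
  field_simp


end ZGV13
end
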